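/- arXiv:2505.04010 — 5 statements merged into one kernel-verified Lean document; each statement's English description precedes it below -/
import Mathlib

section
/- Let p, q : ℝ → ℝ be continuous on [0,1], let B = !![0,1;-1,0] and Q(x) = !![p x, q x; q x, -(p x)]. Let Y : ℝ → ℝ² be differentiable on [0,1] with B · Y'(x) + Q(x) · Y(x) = 0 for all x ∈ [0,1] and Y(0) = (1,0). Define a(x) = (Y₁(x)-1)/2, b(x) = Y₂(x)/2, and Δ(x) = 4*b(x)² + (1 + 2*a(x))². Then Δ(x) > 0 for all x ∈ [0,1], and the potential is recovered by p(x) = (-2*b(x)*(2*a'(x)) - (1 + 2*a(x))*(2*b'(x)))/Δ(x) and q(x) = ((1 + 2*a(x))*(2*a'(x)) - 2*b(x)*(2*b'(x)))/Δ(x) for all x ∈ [0,1], where a' = Y₁'/2 and b' = Y₂'/2. -/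
/-! With `u = Y₀ = 1 + 2a` and `v = Y₁ = 2b`, the quantity `Δ` is `u² + v²`, and the Dirac system
reads `u' = q u - p v`, `v' = -p u - q v`. Given `u² + v² ≠ 0`, these two linear equations are solved
for `p` and `q`, which gives the stated formulas. Positivity of `u² + v²` is a Grönwall argument:
its derivative is `2q(u² - v²) - 4puv ≥ -M (u² + v²)` with `M` a bound for `2|p| + 2|q|` on `[0, 1]`,
so `(u² + v²) e^{Mx}` is nondecreasing and stays at least its value `1` at `x = 0`. -/

open Matrix Real Set

theorem monotoneOn_mul_exp_of_neg_mul_le_deriv {s : Set ℝ} (hs : Convex ℝ s) {f f' : ℝ → ℝ}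
    {M : ℝ} (hf : ∀ x ∈ s, HasDerivAt f (f' x) x) (hle : ∀ x ∈ s, -(M * f x) ≤ f' x) :
    MonotoneOn (fun x => f x * exp (M * x)) s := by
  have hderiv : ∀ x ∈ s,
      HasDerivAt (fun x => f x * exp (M * x)) ((f' x + M * f x) * exp (M * x)) x := by
    intro x hx
    have hexp : HasDerivAt (fun x => exp (M * x)) (exp (M * x) * M) x := by
      simpa using ((hasDerivAt_id x).const_mul M).exp
    exact ((hf x hx).mul hexp).congr_deriv (by ring)
  refine monotoneOn_of_hasDerivWithinAt_nonneg hs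
    (fun x hx => (hderiv x hx).continuousAt.continuousWithinAt)
    (fun x hx => (hderiv x (interior_subset hx)).hasDerivWithinAt) fun x hx => ?_
  have := hle x (interior_subset hx)
  exact mul_nonneg (by linarith) (exp_pos _).le

theorem pos_of_neg_mul_le_deriv {a b M : ℝ} {f f' : ℝ → ℝ}
    (hf : ∀ x ∈ Icc a b, HasDerivAt f (f' x) x) (hle : ∀ x ∈ Icc a b, -(M * f x) ≤ f' x)
    (ha : 0 < f a) : ∀ x ∈ Icc a b, 0 < f x := by
  intro x hx
  have hmono := monotoneOn_mul_exp_of_neg_mul_le_deriv (convex_Icc a b) hf hle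
    (left_mem_Icc.mpr (hx.1.trans hx.2)) hx hx.1
  have : 0 < f x * exp (M * x) := (mul_pos ha (exp_pos _)).trans_le hmono
  exact pos_of_mul_pos_left this (exp_pos _).le

theorem neg_mul_sq_add_sq_le (p q u v : ℝ) :
    -((2 * |p| + 2 * |q|) * (u ^ 2 + v ^ 2)) ≤ 2 * u * (q * u - p * v) + 2 * v * (-p * u - q * v) := by
  have hq : -(|q| * (u ^ 2 + v ^ 2)) ≤ q * (u ^ 2 - v ^ 2) := by
    have := neg_abs_le q
    have := le_abs_self q
    nlinarith [sq_nonneg u, sq_nonneg v]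
  have hp : -(|p| * (u ^ 2 + v ^ 2)) ≤ -(2 * p * u * v) := by
    have := neg_abs_le p
    have := le_abs_self p
    nlinarith [sq_nonneg (u + v), sq_nonneg (u - v)]
  nlinarith

theorem sq_add_sq_pos_of_hasDerivAt {a b : ℝ} {p q u v u' v' : ℝ → ℝ}
    (hp : ContinuousOn p (Icc a b)) (hq : ContinuousOn q (Icc a b))
    (hu : ∀ x ∈ Icc a b, HasDerivAt u (u' x) x) (hv : ∀ x ∈ Icc a b, HasDerivAt v (v' x) x)
    (hu' : ∀ x ∈ Icc a b, u' x = q x * u x - p x * v x)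
    (hv' : ∀ x ∈ Icc a b, v' x = -p x * u x - q x * v x) (ha : 0 < u a ^ 2 + v a ^ 2) :
    ∀ x ∈ Icc a b, 0 < u x ^ 2 + v x ^ 2 := by
  obtain ⟨M, hM⟩ := isCompact_Icc.exists_bound_of_continuousOn
    ((continuousOn_const.mul hp.abs).add (continuousOn_const.mul hq.abs))
  refine pos_of_neg_mul_le_deriv (M := M) (f' := fun x => 2 * u x * u' x + 2 * v x * v' x)
    (fun x hx => ?_) (fun x hx => ?_) ha
  · exact (((hu x hx).pow 2).add ((hv x hx).pow 2)).congr_deriv (by ring)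
  · have hbound : 2 * |p x| + 2 * |q x| ≤ M := (le_abs_self _).trans (hM x hx)
    have := neg_mul_sq_add_sq_le (p x) (q x) (u x) (v x)
    rw [hu' x hx, hv' x hx]
    nlinarith [sq_nonneg (u x), sq_nonneg (v x)]

theorem dirac_system_components {p q : ℝ} {y y' : Fin 2 → ℝ}
    (h : !![0, 1; -1, 0] *ᵥ y' + !![p, q; q, -p] *ᵥ y = 0) :
    y' 0 = q * y 0 - p * y 1 ∧ y' 1 = -p * y 0 - q * y 1 := by
  have h0 := congrFun h 0
  have h1 := congrFun h 1
  simp [dotProduct, Fin.sum_univ_two] at h0 h1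
  constructor <;> linarith

theorem eq_div_sq_add_sq_of_dirac {p q u v u' v' : ℝ} (hr : u ^ 2 + v ^ 2 ≠ 0)
    (hu' : u' = q * u - p * v) (hv' : v' = -p * u - q * v) :
    p = (-v * u' - u * v') / (u ^ 2 + v ^ 2) ∧ q = (u * u' - v * v') / (u ^ 2 + v ^ 2) := by
  subst hu' hv'
  constructor <;> field_simp <;> ring

theorem statement13 (p q : ℝ → ℝ)
    (hp : ContinuousOn p (Set.Icc 0 1)) (hq : ContinuousOn q (Set.Icc 0 1))
    (B : Matrix (Fin 2) (Fin 2) ℝ) (hB : B = !![0, 1; -1, 0])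
    (Q : ℝ → Matrix (Fin 2) (Fin 2) ℝ) (hQ : ∀ x, Q x = !![p x, q x; q x, -(p x)])
    (Y Y' : ℝ → Fin 2 → ℝ)
    (hderiv : ∀ x ∈ Set.Icc (0 : ℝ) 1, ∀ i : Fin 2, HasDerivAt (fun t => Y t i) (Y' x i) x)
    (hode : ∀ x ∈ Set.Icc (0 : ℝ) 1, B.mulVec (Y' x) + (Q x).mulVec (Y x) = 0)
    (hinit : Y 0 = ![1, 0])
    (a b a' b' Δ : ℝ → ℝ)
    (ha : ∀ x, a x = (Y x 0 - 1) / 2) (hb : ∀ x, b x = Y x 1 / 2)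
    (ha' : ∀ x, a' x = Y' x 0 / 2) (hb' : ∀ x, b' x = Y' x 1 / 2)
    (hΔ : ∀ x, Δ x = 4 * (b x) ^ 2 + (1 + 2 * a x) ^ 2) :
    ∀ x ∈ Set.Icc (0 : ℝ) 1, Δ x > 0 ∧
      p x = (-2 * b x * (2 * a' x) - (1 + 2 * a x) * (2 * b' x)) / Δ x ∧
      q x = ((1 + 2 * a x) * (2 * a' x) - 2 * b x * (2 * b' x)) / Δ x := by
  have hsys : ∀ x ∈ Icc (0 : ℝ) 1, Y' x 0 = q x * Y x 0 - p x * Y x 1 ∧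
      Y' x 1 = -p x * Y x 0 - q x * Y x 1 := fun x hx =>
    dirac_system_components (by simpa [hB, hQ] using hode x hx)
  have hpos := sq_add_sq_pos_of_hasDerivAt hp hq (fun x hx => hderiv x hx 0)
    (fun x hx => hderiv x hx 1) (fun x hx => (hsys x hx).1) (fun x hx => (hsys x hx).2)
    (by simp [hinit])
  intro x hx
  have hΔx : Δ x = Y x 0 ^ 2 + Y x 1 ^ 2 := by rw [hΔ, ha, hb]; ring
  obtain ⟨hpx, hqx⟩ := eq_div_sq_add_sq_of_dirac (hpos x hx).ne' (hsys x hx).1 (hsys x hx).2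
  refine ⟨hΔx ▸ hpos x hx, ?_, ?_⟩
  · rw [hpx, hΔx, ha, hb, ha', hb']; ring_nf
  · rw [hqx, hΔx, ha, hb, ha', hb']; ring_nf
end

section
/- Let p, q : ℝ → ℝ be continuous on [0,1], let B = !![0,1;-1,0] and Q(x) = !![p x, q x; q x, -(p x)]. Let Y : ℝ → ℝ² be differentiable on [0,1] with B · Y'(x) + Q(x) · Y(x) = 0 for all x ∈ [0,1] and Y(0) = (0,1). Define c(x) = Y₁(x)/2, d(x) = (Y₂(x)-1)/2, and Δ(x) = (1 + 2*d(x))² + 4*c(x)². Then Δ(x) > 0 for all x ∈ [0,1], and p(x) = (-(1 + 2*d(x))*(2*c'(x)) - 2*c(x)*(2*d'(x)))/Δ(x) and q(x) = (2*c(x)*(2*c'(x)) - (1 + 2*d(x))*(2*d'(x)))/Δ(x) for all x ∈ [0,1], where c' = Y₁'/2 and d' = Y₂'/2. -/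
/-!
Writing the system as `Y' = A Y` with `A = !![q, -p; -p, -q]`, the quantity
`Δ = (1 + 2d)² + 4c² = Y₁² + Y₂²` is the energy `|Y|²`. Its derivative `2 ⟪Y, A Y⟫` is bounded below
by `-2 (|p| + |q|) |Y|²`, so by Grönwall `|Y(x)|² ≥ e^{-2Mx} |Y(0)|² = e^{-2Mx} > 0`, where `M`
bounds `|p| + |q|` on `[0, 1]`.
The two component equations are linear in `(p, q)` with determinant `|Y|²`; solving them gives
the reconstruction formulas.
-/

open Matrix Real Set

theorem mul_exp_neg_le_of_neg_mul_le_deriv {f f' : ℝ → ℝ} {K a b : ℝ}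
    (hf : ContinuousOn f (Icc a b))
    (hf' : ∀ x ∈ Ico a b, HasDerivWithinAt f (f' x) (Ici x) x)
    (bound : ∀ x ∈ Ico a b, -(K * f x) ≤ f' x) :
    ∀ x ∈ Icc a b, f a * exp (-K * (x - a)) ≤ f x := by
  intro x hx
  have h := le_gronwallBound_of_liminf_deriv_right_le (f := fun t => -f t) (f' := fun t => -f' t)
    (K := -K) (ε := 0) hf.neg (fun t ht _ hr => (hf' t ht).neg.liminf_right_slope_le hr) le_rfl
    (fun t ht => by linarith [bound t ht]) x hx
  rw [gronwallBound_ε0] at h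
  linarith

namespace Dirac

theorem component_eqs {p q : ℝ} {y y' : Fin 2 → ℝ}
    (h : !![0, 1; -1, 0] *ᵥ y' + !![p, q; q, -p] *ᵥ y = 0) :
    y' 0 = q * y 0 - p * y 1 ∧ y' 1 = -(p * y 0) - q * y 1 := by
  have h0 := congrFun h 0
  have h1 := congrFun h 1
  simp only [cons_mulVec, dotProduct, Fin.sum_univ_two, Fin.isValue, cons_val_zero, zero_mul,
    cons_val_one, cons_val_fin_one, one_mul, zero_add, neg_mul, add_zero, empty_mulVec,
    Pi.add_apply, Pi.zero_apply] at h0 h1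
  constructor <;> linarith

theorem energy_deriv_ge (p q u v : ℝ) :
    -(2 * (|p| + |q|) * (u ^ 2 + v ^ 2)) ≤ 2 * (u * (q * u - p * v) + v * (-(p * u) - q * v)) := by
  have hdiff : |u ^ 2 - v ^ 2| ≤ u ^ 2 + v ^ 2 := abs_le.2 ⟨by nlinarith, by nlinarith⟩
  have hprod : |2 * u * v| ≤ u ^ 2 + v ^ 2 :=
    abs_le.2 ⟨by nlinarith [sq_nonneg (u + v)], by nlinarith [sq_nonneg (u - v)]⟩
  have hq := neg_abs_le (q * (u ^ 2 - v ^ 2))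
  have hp := le_abs_self (p * (2 * u * v))
  rw [abs_mul] at hq hp
  nlinarith [mul_le_mul_of_nonneg_left hdiff (abs_nonneg q),
    mul_le_mul_of_nonneg_left hprod (abs_nonneg p)]

theorem sq_add_sq_pos {p q : ℝ → ℝ} {Y Y' : ℝ → Fin 2 → ℝ} {a b : ℝ}
    (hp : ContinuousOn p (Icc a b)) (hq : ContinuousOn q (Icc a b))
    (hderiv : ∀ x ∈ Icc a b, ∀ i : Fin 2, HasDerivAt (fun t => Y t i) (Y' x i) x)
    (hsys : ∀ x ∈ Icc a b,
      Y' x 0 = q x * Y x 0 - p x * Y x 1 ∧ Y' x 1 = -(p x * Y x 0) - q x * Y x 1)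
    (ha : 0 < Y a 0 ^ 2 + Y a 1 ^ 2) :
    ∀ x ∈ Icc a b, 0 < Y x 0 ^ 2 + Y x 1 ^ 2 := by
  obtain ⟨M, hM⟩ := isCompact_Icc.exists_bound_of_continuousOn (hp.abs.add hq.abs)
  have hE : ∀ x ∈ Icc a b, HasDerivAt (fun t => Y t 0 ^ 2 + Y t 1 ^ 2)
      (2 * (Y x 0 * Y' x 0 + Y x 1 * Y' x 1)) x := fun x hx => by
    refine (((hderiv x hx 0).fun_pow 2).add ((hderiv x hx 1).fun_pow 2)).congr_deriv ?_
    push_cast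
    ring
  have bound : ∀ x ∈ Ico a b, -(2 * M * (Y x 0 ^ 2 + Y x 1 ^ 2)) ≤
      2 * (Y x 0 * Y' x 0 + Y x 1 * Y' x 1) := fun x hx => by
    have hx' := Ico_subset_Icc_self hx
    have hpq : |p x| + |q x| ≤ M := (le_abs_self _).trans (hM x hx')
    obtain ⟨e0, e1⟩ := hsys x hx'
    rw [e0, e1]
    calc -(2 * M * (Y x 0 ^ 2 + Y x 1 ^ 2))
        ≤ -(2 * (|p x| + |q x|) * (Y x 0 ^ 2 + Y x 1 ^ 2)) := by gcongr
      _ ≤ _ := energy_deriv_ge _ _ _ _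
  intro x hx
  exact (mul_pos ha (exp_pos _)).trans_le <| mul_exp_neg_le_of_neg_mul_le_deriv
    (fun t ht => (hE t ht).continuousAt.continuousWithinAt)
    (fun t ht => (hE t (Ico_subset_Icc_self ht)).hasDerivWithinAt) bound x hx

end Dirac

theorem statement14 (p q : ℝ → ℝ)
    (hp : ContinuousOn p (Set.Icc 0 1)) (hq : ContinuousOn q (Set.Icc 0 1))
    (B : Matrix (Fin 2) (Fin 2) ℝ) (hB : B = !![0, 1; -1, 0])
    (Q : ℝ → Matrix (Fin 2) (Fin 2) ℝ) (hQ : ∀ x, Q x = !![p x, q x; q x, -(p x)])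
    (Y Y' : ℝ → Fin 2 → ℝ)
    (hderiv : ∀ x ∈ Set.Icc (0 : ℝ) 1, ∀ i : Fin 2, HasDerivAt (fun t => Y t i) (Y' x i) x)
    (hode : ∀ x ∈ Set.Icc (0 : ℝ) 1, B.mulVec (Y' x) + (Q x).mulVec (Y x) = 0)
    (hinit : Y 0 = ![0, 1])
    (c d c' d' Δ : ℝ → ℝ)
    (hc : ∀ x, c x = Y x 0 / 2) (hd : ∀ x, d x = (Y x 1 - 1) / 2)
    (hc' : ∀ x, c' x = Y' x 0 / 2) (hd' : ∀ x, d' x = Y' x 1 / 2)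
    (hΔ : ∀ x, Δ x = (1 + 2 * d x) ^ 2 + 4 * (c x) ^ 2) :
    ∀ x ∈ Set.Icc (0 : ℝ) 1, Δ x > 0 ∧
      p x = (-(1 + 2 * d x) * (2 * c' x) - 2 * c x * (2 * d' x)) / Δ x ∧
      q x = (2 * c x * (2 * c' x) - (1 + 2 * d x) * (2 * d' x)) / Δ x := by
  have hsys : ∀ x ∈ Icc (0 : ℝ) 1,
      Y' x 0 = q x * Y x 0 - p x * Y x 1 ∧ Y' x 1 = -(p x * Y x 0) - q x * Y x 1 :=
    fun x hx => Dirac.component_eqs (hB ▸ hQ x ▸ hode x hx)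
  intro x hx
  have hΔY : Δ x = Y x 0 ^ 2 + Y x 1 ^ 2 := by rw [hΔ, hc, hd]; ring
  have hpos : Δ x > 0 :=
    hΔY ▸ Dirac.sq_add_sq_pos hp hq hderiv hsys (by simp [hinit]) x hx
  obtain ⟨e0, e1⟩ := hsys x hx
  refine ⟨hpos, ?_, ?_⟩ <;>
  · rw [eq_div_iff hpos.ne', hΔ, hc, hd, hc', hd', e0, e1]; ring
end

section
/- Let α ∈ ℝ, let p, q : ℝ → ℝ be continuous on [0,1], let B = !![0,1;-1,0] and Q(x) = !![p x, q x; q x, -(p x)]. Let Y : ℝ → ℝ² be differentiable on [0,1] with B · Y'(x) + Q(x) · Y(x) = 0 for all x ∈ [0,1] and Y(0) = (sin α, -cos α). Define c_α(x) = (sin α - Y₁(x))/2, d_α(x) = -(cos α + Y₂(x))/2, and Δ(x) = (cos α + 2*d_α(x))² + (sin α - 2*c_α(x))². Then Δ(x) > 0 for all x ∈ [0,1], and p(x) = (-(cos α + 2*d_α(x))*(2*c_α'(x)) + (sin α - 2*c_α(x))*(2*d_α'(x)))/Δ(x) and q(x) = ((-sin α + 2*c_α(x))*(2*c_α'(x))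 - (cos α + 2*d_α(x))*(2*d_α'(x)))/Δ(x) for all x ∈ [0,1]. -/
/-!
With `Y = (Y₀, Y₁)` one has `Δ = Y₀² + Y₁²`. The system reads `Y₀' = q Y₀ - p Y₁`,
`Y₁' = -p Y₀ - q Y₁`, so `Δ' = 2 (q (Y₀² - Y₁²) - 2 p Y₀ Y₁) ≥ -2 (|p| + |q|) Δ`. With `K` a bound
of `|p| + |q|` on `[0, 1]`, Grönwall's inequality gives `Δ x ≥ e^{-2Kx} Δ 0 = e^{-2Kx} > 0`.
The formulas for `p` and `q` then come from solving the two scalar equations, which are linear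
in `(p, q)` with determinant `Δ`.
-/

open Matrix Real Set

theorem mul_exp_le_of_neg_mul_le_deriv {f f' : ℝ → ℝ} {C a b : ℝ}
    (hf : ContinuousOn f (Icc a b)) (hf' : ∀ x ∈ Ico a b, HasDerivWithinAt f (f' x) (Ici x) x)
    (bound : ∀ x ∈ Ico a b, -(C * f x) ≤ f' x) :
    ∀ x ∈ Icc a b, f a * exp (-C * (x - a)) ≤ f x := by
  -- Grönwall's inequality for `-f`, whose growth rate is at most `-C`.
  intro x hx
  have := le_gronwallBound_of_liminf_deriv_right_le (f := fun t => -f t) (f' := fun t => -f' t)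
    (δ := -f a) (K := -C) (ε := 0) hf.neg
    (fun t ht _ hr => (hf' t ht).neg.liminf_right_slope_le hr) le_rfl
    (fun t ht => by linarith [bound t ht]) x hx
  rw [gronwallBound_ε0] at this
  linarith

theorem dirac_mulVec_eq_zero_iff (a b : ℝ) (v y : Fin 2 → ℝ) :
    !![0, 1; -1, 0] *ᵥ v + !![a, b; b, -a] *ᵥ y = 0 ↔
      v 0 = b * y 0 - a * y 1 ∧ v 1 = -(a * y 0) - b * y 1 := by
  simp only [funext_iff, Fin.forall_fin_two, Pi.add_apply, Pi.zero_apply, mulVec, dotProduct,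
    Fin.sum_univ_two, of_apply, cons_val', cons_val_zero, cons_val_one, empty_val',
    cons_val_fin_one]
  constructor <;> rintro ⟨h₀, h₁⟩ <;> constructor <;> linarith

theorem abs_dirac_energy_deriv_le (a b y₀ y₁ : ℝ) :
    |y₀ * (b * y₀ - a * y₁) + y₁ * (-(a * y₀) - b * y₁)| ≤ (|a| + |b|) * (y₀ ^ 2 + y₁ ^ 2) := by
  have h₁ : |b * (y₀ ^ 2 - y₁ ^ 2)| ≤ |b| * (y₀ ^ 2 + y₁ ^ 2) := by
    rw [abs_mul]
    gcongr
    exact abs_le.mpr ⟨by nlinarith, by nlinarith⟩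
  have h₂ : |2 * a * y₀ * y₁| ≤ |a| * (y₀ ^ 2 + y₁ ^ 2) := by
    rw [mul_comm 2 a, mul_assoc, mul_assoc, abs_mul, ← mul_assoc]
    gcongr
    exact abs_le.mpr ⟨by nlinarith [sq_nonneg (y₀ + y₁)], by nlinarith [sq_nonneg (y₀ - y₁)]⟩
  calc _ = |b * (y₀ ^ 2 - y₁ ^ 2) - 2 * a * y₀ * y₁| := by ring_nf
    _ ≤ _ := (abs_sub _ _).trans (by linarith)

theorem dirac_normSq_ge {p q : ℝ → ℝ} {Y Y' : ℝ → Fin 2 → ℝ} {K a b : ℝ}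
    (hY : ∀ x ∈ Icc a b, ∀ i, HasDerivAt (fun t => Y t i) (Y' x i) x)
    (hode : ∀ x ∈ Icc a b, !![0, 1; -1, 0] *ᵥ Y' x + !![p x, q x; q x, -(p x)] *ᵥ Y x = 0)
    (hK : ∀ x ∈ Icc a b, |p x| + |q x| ≤ K) :
    ∀ x ∈ Icc a b, (Y a 0 ^ 2 + Y a 1 ^ 2) * exp (-(2 * K) * (x - a)) ≤ Y x 0 ^ 2 + Y x 1 ^ 2 := by
  have hderiv : ∀ x ∈ Icc a b, HasDerivAt (fun t => Y t 0 ^ 2 + Y t 1 ^ 2)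
      (2 * (Y x 0 * Y' x 0 + Y x 1 * Y' x 1)) x := fun x hx =>
    (((hY x hx 0).fun_pow 2).fun_add ((hY x hx 1).fun_pow 2)).congr_deriv (by push_cast; ring)
  refine mul_exp_le_of_neg_mul_le_deriv (fun x hx => (hderiv x hx).continuousAt.continuousWithinAt)
    (fun x hx => (hderiv x (Ico_subset_Icc_self hx)).hasDerivWithinAt) fun x hx => ?_
  replace hx := Ico_subset_Icc_self hx
  obtain ⟨h₀, h₁⟩ := (dirac_mulVec_eq_zero_iff _ _ _ _).mp (hode x hx)
  have henergy := abs_dirac_energy_deriv_le (p x) (q x) (Y x 0) (Y x 1)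
  rw [← h₀, ← h₁] at henergy
  have hneg := neg_abs_le (Y x 0 * Y' x 0 + Y x 1 * Y' x 1)
  have hrate : (|p x| + |q x|) * (Y x 0 ^ 2 + Y x 1 ^ 2) ≤ K * (Y x 0 ^ 2 + Y x 1 ^ 2) := by
    gcongr
    exact hK x hx
  linarith

theorem statement15 (α : ℝ) (p q : ℝ → ℝ)
    (hp : ContinuousOn p (Set.Icc 0 1)) (hq : ContinuousOn q (Set.Icc 0 1))
    (B : Matrix (Fin 2) (Fin 2) ℝ) (hB : B = !![0, 1; -1, 0])
    (Q : ℝ → Matrix (Fin 2) (Fin 2) ℝ) (hQ : ∀ x, Q x = !![p x, q x; q x, -(p x)])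
    (Y Y' : ℝ → Fin 2 → ℝ)
    (hderiv : ∀ x ∈ Set.Icc (0 : ℝ) 1, ∀ i : Fin 2, HasDerivAt (fun t => Y t i) (Y' x i) x)
    (hode : ∀ x ∈ Set.Icc (0 : ℝ) 1, B.mulVec (Y' x) + (Q x).mulVec (Y x) = 0)
    (hinit : Y 0 = ![Real.sin α, -Real.cos α])
    (cα dα cα' dα' Δ : ℝ → ℝ)
    (hc : ∀ x, cα x = (Real.sin α - Y x 0) / 2) (hd : ∀ x, dα x = -(Real.cos α + Y x 1) / 2)
    (hc' : ∀ x, cα' x = -(Y' x 0) / 2) (hd' : ∀ x, dα' x = -(Y' x 1) / 2)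
    (hΔ : ∀ x, Δ x = (Real.cos α + 2 * dα x) ^ 2 + (Real.sin α - 2 * cα x) ^ 2) :
    ∀ x ∈ Set.Icc (0 : ℝ) 1, Δ x > 0 ∧
      p x = (-(Real.cos α + 2 * dα x) * (2 * cα' x) + (Real.sin α - 2 * cα x) * (2 * dα' x)) / Δ x ∧
      q x = ((-Real.sin α + 2 * cα x) * (2 * cα' x) - (Real.cos α + 2 * dα x) * (2 * dα' x)) / Δ x := by
  subst hB
  simp only [hQ] at hode
  obtain ⟨K, hK⟩ := isCompact_Icc.exists_bound_of_continuousOn (hp.abs.add hq.abs)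
  have hΔY : ∀ x, Δ x = Y x 0 ^ 2 + Y x 1 ^ 2 := fun x => by rw [hΔ, hc, hd]; ring
  have hY0 : Y 0 0 ^ 2 + Y 0 1 ^ 2 = 1 := by simp [hinit, sin_sq_add_cos_sq]
  intro x hx
  have hΔpos : 0 < Δ x := by
    have hlower := dirac_normSq_ge hderiv hode (fun t ht => (le_abs_self _).trans (hK t ht)) x hx
    rw [hY0, one_mul] at hlower
    rw [hΔY]
    exact (exp_pos _).trans_le hlower
  obtain ⟨h₀, h₁⟩ := (dirac_mulVec_eq_zero_iff _ _ _ _).mp (hode x hx)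
  refine ⟨hΔpos, ?_, ?_⟩ <;> rw [eq_div_iff hΔpos.ne', hΔY, hc, hd, hc', hd', h₀, h₁] <;> ring
end

section
/- For n ∈ ℕ let P_n denote the n-th Legendre polynomial, P_n(y) = (1/(2ⁿ n!)) · (dⁿ/dyⁿ)(y² - 1)ⁿ. Fix x > 0 and for k ∈ ℕ define p_k : [0,x] → ℝ by p_k(t) = (√(2k+1)/√x) · P_k(t/x), and the diagonal matrix-valued function Â_k(t) = !![p_{2k}(t), 0; 0, p_{2k+1}(t)]. Then the family {Â_k}_{k≥0} is orthonormal with respect to the matrix-valued inner product on [0,x]: for all k, j ∈ ℕ, ∫_0^x Â_k(t) * (Â_j(t))ᵀ dt = δ_{kj} • 1, where 1 is the 2×2 identity matrix and δ_{kj} is the Kronecker delta. -/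
/-!
Rodrigues' formula and `n` integrations by parts (the boundary terms vanish because
`(X² - 1)ⁿ` has zeros of order `n` at `±1`) give
`∫₋₁¹ q Pₙ = (2ⁿ n!)⁻¹ ∫₋₁¹ q⁽ⁿ⁾ (1 - t²)ⁿ`.
This vanishes when `deg q < n`, and for `q = Pₙ` the Wallis integral
`∫₋₁¹ (1 - t²)ⁿ = ∫₀^π sin²ⁿ⁺¹` yields `2 / (2n + 1)`.
When `m + j` is even, `Pₘ Pⱼ` is even, so its integral over `[0, 1]` is half of that over
`[-1, 1]`; rescaling `[0, 1]` to `[0, x]` makes the `pₖ` of equal parity orthonormal, and the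
diagonal entries of `Âₖ Âⱼᵀ` only pair `p₂ₖ` with `p₂ⱼ` and `p₂ₖ₊₁` with `p₂ⱼ₊₁`.
-/

open Matrix Polynomial intervalIntegral
open scoped Matrix.Norms.L2Operator

/-- The `n`-th Legendre polynomial, via the Rodrigues formula
`P_n(y) = (1/(2ⁿ n!)) · (dⁿ/dyⁿ)(y² - 1)ⁿ`. -/
noncomputable def legendreP (n : ℕ) : Polynomial ℝ :=
  (1 / (2 ^ n * n.factorial) : ℝ) • (Polynomial.derivative^[n] ((Polynomial.X ^ 2 - 1) ^ n))

open Real Finset Nat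
open MeasureTheory (volume)

namespace Polynomial

theorem Monic.iterate_derivative_natDegree {R : Type*} [Semiring R] {p : R[X]} (hp : p.Monic) :
    derivative^[p.natDegree] p = C (p.natDegree ! : R) := by
  have hdeg : (derivative^[p.natDegree] p).natDegree ≤ 0 :=
    (natDegree_iterate_derivative p _).trans (Nat.sub_self _).le
  rw [eq_C_of_natDegree_le_zero hdeg, coeff_iterate_derivative, zero_add, Nat.descFactorial_self,
    hp.coeff_natDegree, nsmul_one]

theorem iterate_derivative_comp_neg_X {R : Type*} [CommRing R] (p : R[X]) (k : ℕ) :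
    derivative^[k] (p.comp (-X)) = (-1) ^ k * (derivative^[k] p).comp (-X) := by
  induction k with
  | zero => simp
  | succ k ih =>
    rw [Function.iterate_succ_apply', ih, derivative_mul, derivative_comp,
      Function.iterate_succ_apply']
    simp only [derivative_pow, derivative_neg, derivative_one, derivative_X]
    ring

end Polynomial

theorem monic_X_sq_sub_one_pow (n : ℕ) : ((X ^ 2 - 1 : ℝ[X]) ^ n).Monic :=
  (by simpa using monic_X_pow_sub_C (1 : ℝ) two_ne_zero : (X ^ 2 - 1 : ℝ[X]).Monic).pow n

theorem natDegree_X_sq_sub_one_pow (n : ℕ) : ((X ^ 2 - 1 : ℝ[X]) ^ n).natDegree = 2 * n := by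
  have h : (X ^ 2 - 1 : ℝ[X]).natDegree = 2 := by
    simpa using natDegree_X_pow_sub_C (n := 2) (r := (1 : ℝ))
  rw [natDegree_pow, h, mul_comm]

theorem eval_iterate_derivative_X_sq_sub_one_pow {n k : ℕ} (hk : k < n) {y : ℝ}
    (hy : y ^ 2 = 1) :
    eval y (derivative^[k] ((X ^ 2 - 1 : ℝ[X]) ^ n)) = 0 := by
  obtain ⟨q, hq⟩ := pow_sub_dvd_iterate_derivative_pow (X ^ 2 - 1 : ℝ[X]) n k
  simp [hq, hy, Nat.sub_ne_zero_of_lt hk]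

section IntegrationByParts

variable {a b : ℝ}

theorem integral_eval_mul_eval_derivative (p q : ℝ[X]) (ha : p.eval a = 0) (hb : p.eval b = 0) :
    ∫ t in a..b, q.eval t * (derivative p).eval t
      = -∫ t in a..b, (derivative q).eval t * p.eval t := by
  rw [integral_mul_deriv_eq_deriv_mul (fun t _ ↦ q.hasDerivAt t) (fun t _ ↦ p.hasDerivAt t)
    ((derivative q).continuous.intervalIntegrable _ _)
    ((derivative p).continuous.intervalIntegrable _ _), ha, hb]
  ring

theorem integral_eval_mul_eval_iterate_derivative (p q : ℝ[X]) (n : ℕ)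
    (hp : ∀ i < n, (derivative^[i] p).eval a = 0 ∧ (derivative^[i] p).eval b = 0) :
    ∫ t in a..b, q.eval t * (derivative^[n] p).eval t
      = (-1) ^ n * ∫ t in a..b, (derivative^[n] q).eval t * p.eval t := by
  induction n generalizing q with
  | zero => simp
  | succ n ih =>
    obtain ⟨ha, hb⟩ := hp n n.lt_succ_self
    rw [Function.iterate_succ_apply', integral_eval_mul_eval_derivative _ _ ha hb,
      ih _ fun i hi ↦ hp i (hi.trans n.lt_succ_self), ← Function.iterate_succ_apply, pow_succ]
    ring

end IntegrationByParts

theorem natDegree_legendreP_le (n : ℕ) : (legendreP n).natDegree ≤ n := by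
  refine (natDegree_smul_le _ _).trans ((natDegree_iterate_derivative _ n).trans ?_)
  rw [natDegree_X_sq_sub_one_pow]
  omega

theorem integral_eval_mul_legendreP (q : ℝ[X]) (n : ℕ) :
    ∫ t in (-1)..1, q.eval t * (legendreP n).eval t
      = 1 / (2 ^ n * n !) * ∫ t in (-1)..1, (derivative^[n] q).eval t * (1 - t ^ 2) ^ n := by
  have hvanish : ∀ i < n, (derivative^[i] ((X ^ 2 - 1 : ℝ[X]) ^ n)).eval (-1) = 0 ∧
      (derivative^[i] ((X ^ 2 - 1 : ℝ[X]) ^ n)).eval 1 = 0 := fun i hi ↦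
    ⟨eval_iterate_derivative_X_sq_sub_one_pow hi (by norm_num),
      eval_iterate_derivative_X_sq_sub_one_pow hi (by norm_num)⟩
  simp_rw [legendreP, eval_smul, smul_eq_mul, mul_left_comm (q.eval _), integral_const_mul,
    integral_eval_mul_eval_iterate_derivative _ q n hvanish, ← integral_const_mul]
  congr 1 with t
  simp only [eval_pow, eval_sub, eval_X, eval_one]
  have hsign : (-1 : ℝ) ^ n * (t ^ 2 - 1) ^ n = (1 - t ^ 2) ^ n := by rw [← mul_pow]; ring
  rw [← hsign]
  ring

theorem integral_eval_mul_legendreP_of_natDegree_lt {q : ℝ[X]} {n : ℕ} (hq : q.natDegree < n) :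
    ∫ t in (-1)..1, q.eval t * (legendreP n).eval t = 0 := by
  simp [integral_eval_mul_legendreP, iterate_derivative_eq_zero hq]

theorem integral_one_sub_sq_pow (n : ℕ) :
    ∫ t in (-1 : ℝ)..1, (1 - t ^ 2) ^ n
      = 2 * (2 ^ n * n ! : ℝ) ^ 2 / ((2 * n)! * (2 * n + 1)) := by
  have hsub := integral_sin_pow_odd_mul_cos_pow (a := 0) (b := π) n 0
  simp only [pow_zero, one_mul, mul_one, cos_zero, cos_pi] at hsub
  rw [← hsub, integral_sin_pow_odd]
  clear hsub
  induction n with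
  | zero => simp
  | succ n ih =>
    have hfac : ((2 * (n + 1))! : ℝ) = (2 * n + 2) * ((2 * n + 1) * (2 * n)!) := by
      rw [show 2 * (n + 1) = 2 * n + 1 + 1 by ring, factorial_succ, factorial_succ]
      push_cast
      ring
    rw [prod_range_succ, ← mul_assoc, ih, hfac, factorial_succ]
    push_cast
    field_simp
    ring

theorem iterate_derivative_legendreP_self (n : ℕ) :
    derivative^[n] (legendreP n) = C ((2 * n)! / (2 ^ n * n !) : ℝ) := by
  have htop := (monic_X_sq_sub_one_pow n).iterate_derivative_natDegree
  rw [natDegree_X_sq_sub_one_pow, two_mul, Function.iterate_add_apply] at htop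
  rw [legendreP, iterate_derivative_smul, htop, smul_C, smul_eq_mul, two_mul]
  ring_nf

theorem integral_legendreP_mul_self (n : ℕ) :
    ∫ t in (-1)..1, (legendreP n).eval t * (legendreP n).eval t = 2 / (2 * n + 1) := by
  simp only [integral_eval_mul_legendreP, iterate_derivative_legendreP_self, eval_C,
    integral_const_mul, integral_one_sub_sq_pow]
  field_simp

theorem integral_legendreP_mul_legendreP (n m : ℕ) :
    ∫ t in (-1)..1, (legendreP n).eval t * (legendreP m).eval t
      = if n = m then (2 / (2 * n + 1) : ℝ) else 0 := by
  rcases lt_trichotomy n m with h | rfl | h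
  · rw [if_neg h.ne, integral_eval_mul_legendreP_of_natDegree_lt
      ((natDegree_legendreP_le n).trans_lt h)]
  · rw [if_pos rfl, integral_legendreP_mul_self]
  · simp_rw [if_neg h.ne', mul_comm ((legendreP n).eval _)]
    exact integral_eval_mul_legendreP_of_natDegree_lt ((natDegree_legendreP_le m).trans_lt h)

theorem eval_neg_legendreP (n : ℕ) (y : ℝ) :
    (legendreP n).eval (-y) = (-1) ^ n * (legendreP n).eval y := by
  have heven : ((X ^ 2 - 1 : ℝ[X]) ^ n).comp (-X) = (X ^ 2 - 1) ^ n := by simp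
  have h := congrArg (eval (-y)) (iterate_derivative_comp_neg_X ((X ^ 2 - 1 : ℝ[X]) ^ n) n)
  rw [heven] at h
  simp only [eval_mul, eval_pow, eval_neg, eval_one, eval_comp, eval_X, neg_neg] at h
  simp only [legendreP, eval_smul, smul_eq_mul, h]
  ring

theorem integral_symm_eq_two_mul_of_even {f : ℝ → ℝ} {a : ℝ} (heven : ∀ t, f (-t) = f t)
    (hf : IntervalIntegrable f volume 0 a) :
    ∫ t in (-a)..a, f t = 2 * ∫ t in 0..a, f t := by
  have hneg : ∫ t in (-a)..0, f t = ∫ t in 0..a, f t := by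
    simpa [heven] using (integral_comp_neg (a := 0) (b := a) f).symm
  have hf' : IntervalIntegrable f volume (-a) 0 := by
    simpa [heven] using ((IntervalIntegrable.iff_comp_neg (by simp)).1 hf).symm
  rw [← integral_add_adjacent_intervals hf' hf, hneg, two_mul]

theorem integral_zero_one_legendreP_mul_legendreP {m j : ℕ} (hmj : Even (m + j)) :
    ∫ t in (0 : ℝ)..1, (legendreP m).eval t * (legendreP j).eval t
      = if m = j then (1 / (2 * m + 1) : ℝ) else 0 := by
  have hsign : (-1 : ℝ) ^ m * (-1) ^ j = 1 := by rw [← pow_add, hmj.neg_one_pow]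
  have h := integral_symm_eq_two_mul_of_even (a := 1)
    (f := fun t ↦ (legendreP m).eval t * (legendreP j).eval t)
    (fun t ↦ by
      simp only [eval_neg_legendreP]
      linear_combination ((legendreP m).eval t * (legendreP j).eval t) * hsign)
    ((by fun_prop : Continuous _).intervalIntegrable 0 1)
  rw [integral_legendreP_mul_legendreP] at h
  split_ifs at h ⊢
  · field_simp at h ⊢
    linarith
  · linarith

noncomputable def normalizedLegendre (x : ℝ) (k : ℕ) (t : ℝ) : ℝ :=
  (Real.sqrt (2 * (k : ℝ) + 1) / Real.sqrt x) * (legendreP k).eval (t / x)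

theorem continuous_normalizedLegendre (x : ℝ) (k : ℕ) :
    Continuous (normalizedLegendre x k) := by
  unfold normalizedLegendre
  fun_prop

theorem integral_normalizedLegendre_mul {x : ℝ} (hx : 0 < x) {m j : ℕ} (hmj : Even (m + j)) :
    ∫ t in (0 : ℝ)..x, normalizedLegendre x m t * normalizedLegendre x j t
      = if m = j then 1 else 0 := by
  have hscale : ∀ t, normalizedLegendre x m t * normalizedLegendre x j t
      = √(2 * m + 1) * √(2 * j + 1) / x
        * ((legendreP m).eval (t / x) * (legendreP j).eval (t / x)) := fun t ↦ by
    simp only [normalizedLegendre]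
    field_simp
    rw [sq_sqrt hx.le]
  simp_rw [hscale, integral_const_mul,
    integral_comp_div (fun t ↦ (legendreP m).eval t * (legendreP j).eval t) hx.ne', zero_div,
    div_self hx.ne', integral_zero_one_legendreP_mul_legendreP hmj, smul_eq_mul]
  split_ifs with h
  · subst h
    rw [mul_self_sqrt (by positivity)]
    field_simp
  · simp

theorem fin_two_diag_mul_transpose (a b c d : ℝ) :
    !![a, 0; 0, b] * !![c, 0; 0, d]ᵀ = !![a * c, 0; 0, b * d] := by
  ext i k
  fin_cases i <;> fin_cases k <;> simp [Matrix.mul_apply]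

theorem integral_fin_two_diag {f g : ℝ → ℝ} {a b : ℝ}
    (hf : IntervalIntegrable f volume a b)
    (hg : IntervalIntegrable g volume a b) :
    ∫ t in a..b, !![f t, 0; 0, g t] = !![∫ t in a..b, f t, 0; 0, ∫ t in a..b, g t] := by
  have hsplit : ∀ u v : ℝ,
      !![u, 0; 0, v] = u • !![(1 : ℝ), 0; 0, 0] + v • !![(0 : ℝ), 0; 0, 1] := by
    intro u v
    ext i k
    fin_cases i <;> fin_cases k <;> simp
  calc ∫ t in a..b, !![f t, 0; 0, g t]
      = ∫ t in a..b, (f t • !![(1 : ℝ), 0; 0, 0] + g t • !![(0 : ℝ), 0; 0, 1]) :=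
        integral_congr fun t _ ↦ hsplit _ _
    _ = _ := by
      rw [integral_add (hf.smul_continuousOn continuousOn_const)
        (hg.smul_continuousOn continuousOn_const), intervalIntegral.integral_smul_const,
        intervalIntegral.integral_smul_const, hsplit (∫ t in a..b, f t)]

theorem statement16 (x : ℝ) (hx : 0 < x)
    (p : ℕ → ℝ → ℝ)
    (hp : ∀ (k : ℕ) (t : ℝ), p k t =
      (Real.sqrt (2 * (k : ℝ) + 1) / Real.sqrt x) * (legendreP k).eval (t / x))
    (Ahat : ℕ → ℝ → Matrix (Fin 2) (Fin 2) ℝ)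
    (hA : ∀ (k : ℕ) (t : ℝ), Ahat k t = !![p (2 * k) t, 0; 0, p (2 * k + 1) t]) :
    ∀ k j : ℕ, (∫ t in (0 : ℝ)..x, Ahat k t * (Ahat j t)ᵀ) =
      if k = j then (1 : Matrix (Fin 2) (Fin 2) ℝ) else 0 := by
  intro k j
  obtain rfl : p = normalizedLegendre x := funext₂ hp
  have hint : ∀ m n, IntervalIntegrable
      (fun t ↦ normalizedLegendre x m t * normalizedLegendre x n t) volume 0 x := fun m n ↦
    ((continuous_normalizedLegendre x m).mul
      (continuous_normalizedLegendre x n)).intervalIntegrable _ _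
  simp_rw [hA, fin_two_diag_mul_transpose]
  rw [integral_fin_two_diag (hint _ _) (hint _ _),
    integral_normalizedLegendre_mul hx ⟨k + j, by ring⟩,
    integral_normalizedLegendre_mul hx ⟨k + j + 1, by ring⟩]
  by_cases h : k = j
  · simp [h, one_fin_two]
  · simpa [h] using (eta_fin_two (0 : Matrix (Fin 2) (Fin 2) ℝ)).symm
end

section
/- Let B = !![0,1;-1,0] and σ̃₂ = !![1,0;0,-1] be 2×2 real matrices, and let λ, x, t be real numbers. Then (1/2) • (exp(-(λ*(x-t)) • B) + exp(-(λ*(x+t)) • B) * σ̃₂) = !![cos(λx)·cos(λt), cos(λx)·sin(λt); sin(λx)·cos(λt), sin(λx)·sin(λt)]. -/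
open Matrix Real

/-- Euler's formula transported along the embedding `ℂ →ₐ[ℝ] A` sending `I` to `J`, which commutes
with `exp` because it is continuous. -/
theorem NormedSpace.exp_smul_of_mul_self_eq_neg_one {A : Type*} [NormedRing A] [NormedAlgebra ℝ A]
    [Algebra ℚ A] {J : A} (hJ : J * J = -1) (θ : ℝ) :
    NormedSpace.exp (θ • J) = algebraMap ℝ A (Real.cos θ) + Real.sin θ • J := by
  set f : ℂ →ₐ[ℝ] A := Complex.lift ⟨J, hJ⟩
  have hf : Continuous f := f.toLinearMap.continuous_of_finiteDimensional
  have hθJ : θ • J = f (θ * Complex.I) := by simp [f]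
  rw [hθJ, ← NormedSpace.map_exp f hf, ← Complex.exp_eq_exp_ℂ]
  simp [f, Complex.exp_ofReal_mul_I_re, Complex.exp_ofReal_mul_I_im]

theorem Matrix.exp_smul_rotationGenerator (θ : ℝ) :
    NormedSpace.exp (θ • !![0, 1; -1, 0] : Matrix (Fin 2) (Fin 2) ℝ) =
      !![Real.cos θ, Real.sin θ; -Real.sin θ, Real.cos θ] := by
  -- `exp` does not depend on the norm; any submultiplicative one lets us apply the lemma above.
  let : NormedRing (Matrix (Fin 2) (Fin 2) ℝ) := Matrix.linftyOpNormedRing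
  let : NormedAlgebra ℝ (Matrix (Fin 2) (Fin 2) ℝ) := Matrix.linftyOpNormedAlgebra
  have hJ : (!![0, 1; -1, 0] : Matrix (Fin 2) (Fin 2) ℝ) * !![0, 1; -1, 0] = -1 := by
    simp [Matrix.one_fin_two]
  refine (NormedSpace.exp_smul_of_mul_self_eq_neg_one hJ θ).trans ?_
  ext i j
  fin_cases i <;> fin_cases j <;> simp [Matrix.algebraMap_matrix_apply]

theorem statement18
    (B : Matrix (Fin 2) (Fin 2) ℝ) (hB : B = !![0, 1; -1, 0])
    (σ2 : Matrix (Fin 2) (Fin 2) ℝ) (hσ2 : σ2 = !![1, 0; 0, -1])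
    (lam x t : ℝ) :
    ((1 : ℝ) / 2) • (NormedSpace.exp ((-(lam * (x - t))) • B) +
        NormedSpace.exp ((-(lam * (x + t))) • B) * σ2) =
      !![Real.cos (lam * x) * Real.cos (lam * t), Real.cos (lam * x) * Real.sin (lam * t);
         Real.sin (lam * x) * Real.cos (lam * t), Real.sin (lam * x) * Real.sin (lam * t)] := by
  subst hB hσ2
  rw [Matrix.exp_smul_rotationGenerator, Matrix.exp_smul_rotationGenerator]
  ext i j
  fin_cases i <;> fin_cases j <;>
    · simp [mul_sub, mul_add, cos_add, sin_add, cos_sub, sin_sub]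
      ring
end
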